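/- arXiv:2109.10530 — 6 statements merged into one kernel-verified Lean document; each statement's English description precedes it below -/
import Mathlib

section
/- Let G be a non-abelian n-centralizer F-group. Then Z(G) has finite index in G and |G/Z(G)| ≤ (n−2)². -/
/-- The set of element centralizers of a group `G`. -/
def centSet (G : Type*) [Group G] : Set (Subgroup G) :=
  Set.range fun x : G => Subgroup.centralizer {x}

/-- `G` is an F-group if for non-central `x, y`, `C(x) ≤ C(y)` implies `C(x) = C(y)`. -/
def IsFGroup (G : Type*) [Group G] : Prop :=
  ∀ x y : G, x ∉ Subgroup.center G → y ∉ Subgroup.center G →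
    Subgroup.centralizer {x} ≤ Subgroup.centralizer {y} →
    Subgroup.centralizer ({x} : Set G) = Subgroup.centralizer {y}

/-! Fix, for every proper subgroup `D`, an element `w D ∉ D`. For non-central `g` the pair
`(C(g), C(g y))` with `y = w (C g)` determines the coset `g Z(G)`: if `h` has the same pair, then
`g h⁻¹ = (g y)(h y)⁻¹` centralizes `C(g y)`, and unless `g h⁻¹` is central the F-group property
gives `C(g y) = C(g h⁻¹) ∋ g`, so `g` would commute with `y`. The first entry is one of the
`n - 1` proper centralizers and the second a proper centralizer other than `C(g)` and `C(y)`;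
together with the central coset this gives `|G/Z(G)| ≤ 1 + (n - 1)(n - 3) = (n - 2)²`. -/

open Subgroup

section Centralizers

variable {G : Type*} [Group G] {g x y : G}

theorem self_mem_centralizer_singleton (g : G) : g ∈ centralizer {g} :=
  mem_centralizer_singleton_iff.2 rfl

theorem mem_centralizer_singleton_comm : x ∈ centralizer {y} ↔ y ∈ centralizer {x} := by
  simp only [mem_centralizer_singleton_iff, eq_comm]

theorem centralizer_singleton_eq_top_iff : centralizer {x} = ⊤ ↔ x ∈ center G := by
  rw [centralizer_eq_top_iff_subset, Set.singleton_subset_iff, SetLike.mem_coe]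

theorem centralizer_mul_of_mem_center (hx : x ∈ center G) :
    centralizer {x * y} = centralizer {y} := by
  ext k
  simp only [mem_centralizer_singleton_iff]
  rw [← mul_assoc, mem_center_iff.1 hx k, mul_assoc, mul_assoc, mul_left_cancel_iff]

theorem mem_centralizer_singleton_mul_iff : g ∈ centralizer {g * y} ↔ y ∈ centralizer {g} := by
  rw [mem_centralizer_singleton_comm,
    Subgroup.mul_mem_cancel_left _ (self_mem_centralizer_singleton g)]

theorem notMem_center_of_notMem_centralizer (hy : y ∉ centralizer {x}) : y ∉ center G :=
  fun hc => hy (center_le_centralizer _ hc)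

theorem centralizer_singleton_ne_top_of_notMem (hy : y ∉ centralizer {x}) :
    centralizer {y} ≠ ⊤ :=
  mt centralizer_singleton_eq_top_iff.1 (notMem_center_of_notMem_centralizer hy)

theorem centralizer_singleton_ne_of_notMem (hy : y ∉ centralizer {x}) :
    centralizer {y} ≠ centralizer {x} := fun he =>
  hy (he ▸ self_mem_centralizer_singleton y)

theorem mul_notMem_centralizer_singleton_left (hy : y ∉ centralizer {g}) :
    g * y ∉ centralizer {g} :=
  mt (Subgroup.mul_mem_cancel_left _ (self_mem_centralizer_singleton g)).1 hy

theorem mul_notMem_centralizer_singleton_right (hy : y ∉ centralizer {g}) :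
    g * y ∉ centralizer {y} := by
  rwa [Subgroup.mul_mem_cancel_right _ (self_mem_centralizer_singleton y),
    mem_centralizer_singleton_comm]

end Centralizers

theorem IsFGroup.mk_eq_mk_of_centralizer_eq {G : Type*} [Group G] (hF : IsFGroup G) {g h y : G}
    (hy : y ∉ centralizer {g}) (hgh : centralizer {g} = centralizer {h})
    (hghy : centralizer {g * y} = centralizer {h * y}) :
    (g : G ⧸ center G) = h := by
  have hg_mem : g ∈ centralizer {g * h⁻¹} := by
    have hhg : Commute h g :=
      mem_centralizer_singleton_iff.1 (hgh ▸ self_mem_centralizer_singleton h)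
    exact mem_centralizer_singleton_iff.2 ((Commute.refl g).mul_right hhg.symm.inv_right).eq
  have hle : centralizer {g * y} ≤ centralizer {g * h⁻¹} := by
    intro d hd
    have h₁ : Commute d (g * y) := mem_centralizer_singleton_iff.1 hd
    have h₂ : Commute d (h * y) := mem_centralizer_singleton_iff.1 (hghy ▸ hd)
    have : g * h⁻¹ = g * y * (h * y)⁻¹ := by group
    exact mem_centralizer_singleton_iff.2 (this ▸ h₁.mul_right h₂.inv_right).eq
  rw [QuotientGroup.eq_iff_div_mem, div_eq_mul_inv]
  by_contra hc
  have hgy : g * y ∉ center G :=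
    notMem_center_of_notMem_centralizer (mul_notMem_centralizer_singleton_left hy)
  exact hy (mem_centralizer_singleton_mul_iff.1 (hF _ _ hgy hc hle ▸ hg_mem))

theorem Subgroup.finiteIndex_and_card_quotient_le {G α : Type*} [Group G] {H : Subgroup G}
    (s : Finset α) (f : G → α) (hs : ∀ g, f g ∈ s)
    (hf : ∀ g h, f g = f h → (g : G ⧸ H) = h) :
    H.FiniteIndex ∧ Nat.card (G ⧸ H) ≤ s.card := by
  let φ : G ⧸ H → s := fun q => ⟨f q.out, hs _⟩
  have hφ : φ.Injective := fun q r he => by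
    simpa only [QuotientGroup.out_eq'] using hf _ _ (congrArg Subtype.val he)
  have : Finite (G ⧸ H) := Finite.of_injective φ hφ
  exact ⟨finiteIndex_of_finite_quotient, (Nat.card_le_card_of_injective φ hφ).trans_eq
    (Nat.card_eq_finsetCard s)⟩

theorem Finset.card_insert_biUnion_erase_erase_le {α : Type*} [DecidableEq α] (p : α × α)
    {S : Finset α} (hS : S.Nonempty) (e : α → α) (he : ∀ a ∈ S, e a ∈ S ∧ e a ≠ a) :
    (insert p (S.biUnion fun a => {a} ×ˢ ((S.erase a).erase (e a)))).card ≤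
      (S.card - 1) ^ 2 := by
  obtain ⟨a, ha⟩ := hS
  obtain ⟨k, hk⟩ : ∃ k, S.card = k + 2 :=
    Nat.exists_eq_add_of_le' (one_lt_card.2 ⟨a, ha, e a, (he a ha).1, (he a ha).2.symm⟩)
  have hfiber : ∀ a ∈ S, ((S.erase a).erase (e a)).card = k := fun a ha => by
    rw [card_erase_of_mem (mem_erase.2 ⟨(he a ha).2, (he a ha).1⟩), card_erase_of_mem ha, hk]
    rfl
  calc _ ≤ _ := card_insert_le _ _
    _ ≤ S.card * k + 1 := by
      gcongr
      exact card_biUnion_le_card_mul _ _ _ fun a ha => by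
        rw [card_product, card_singleton, one_mul, hfiber a ha]
    _ = (S.card - 1) ^ 2 := by rw [hk, show k + 2 - 1 = k + 1 by omega]; ring

section CentralizerPair

variable {G : Type*} [Group G]

def centralizerPair (w : Subgroup G → G) (g : G) : Subgroup G × Subgroup G :=
  (centralizer {g}, centralizer {g * w (centralizer {g})})

theorem IsFGroup.mk_eq_mk_of_centralizerPair_eq (hF : IsFGroup G) {w : Subgroup G → G}
    (hw : ∀ D, D ≠ ⊤ → w D ∉ D) {g h : G} (he : centralizerPair w g = centralizerPair w h) :
    (g : G ⧸ center G) = h := by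
  obtain ⟨hgh, hghw⟩ := Prod.ext_iff.1 he
  dsimp only [centralizerPair] at hgh hghw
  by_cases hg : centralizer {g} = ⊤
  · rw [QuotientGroup.eq_iff_div_mem]
    exact div_mem (centralizer_singleton_eq_top_iff.1 hg)
      (centralizer_singleton_eq_top_iff.1 (hgh ▸ hg))
  · rw [← hgh] at hghw
    exact hF.mk_eq_mk_of_centralizer_eq (hw _ hg) hgh hghw

theorem centralizerPair_mem [DecidableEq (Subgroup G)] {w : Subgroup G → G}
    (hw : ∀ D, D ≠ ⊤ → w D ∉ D) {S : Finset (Subgroup G)}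
    (hS : ∀ g, centralizer {g} ≠ ⊤ → centralizer {g} ∈ S) (g : G) :
    centralizerPair w g ∈ insert (⊤, centralizer {w ⊤})
      (S.biUnion fun D => {D} ×ˢ ((S.erase D).erase (centralizer {w D}))) := by
  by_cases hg : centralizer {g} = ⊤
  · rw [centralizerPair, hg,
      centralizer_mul_of_mem_center (centralizer_singleton_eq_top_iff.1 hg)]
    exact Finset.mem_insert_self _ _
  · have hy := hw _ hg
    refine Finset.mem_insert_of_mem (Finset.mem_biUnion.2 ⟨_, hS g hg, ?_⟩)
    have hyl := mul_notMem_centralizer_singleton_left hy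
    exact Finset.mem_product.2 ⟨Finset.mem_singleton_self _, Finset.mem_erase.2
      ⟨centralizer_singleton_ne_of_notMem (mul_notMem_centralizer_singleton_right hy),
        Finset.mem_erase.2 ⟨centralizer_singleton_ne_of_notMem hyl,
          hS _ (centralizer_singleton_ne_top_of_notMem hyl)⟩⟩⟩

end CentralizerPair

/-- A non-abelian `n`-centralizer F-group satisfies `|G/Z(G)| ≤ (n-2)²`. -/
theorem stmt1 (G : Type*) [Group G] (hG : ¬∀ a b : G, a * b = b * a) (n : ℕ)
    (hFgroup : IsFGroup G)
    (hfin : (centSet G).Finite) (hcard : (centSet G).ncard = n) :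
    (Subgroup.center G).FiniteIndex ∧
      Nat.card (G ⧸ Subgroup.center G) ≤ (n - 2) ^ 2 := by
  classical
  choose! w hw using fun D : Subgroup G => SetLike.exists_not_mem_of_ne_top D
  set S := hfin.toFinset.erase ⊤
  have hS : ∀ g : G, centralizer {g} ≠ ⊤ → centralizer {g} ∈ S := fun g hg =>
    Finset.mem_erase.2 ⟨hg, hfin.mem_toFinset.2 ⟨g, rfl⟩⟩
  have hwS : ∀ D ∈ S, centralizer {w D} ∈ S ∧ centralizer {w D} ≠ D := by
    intro D hD
    obtain ⟨hD, hDc⟩ := Finset.mem_erase.1 hD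
    obtain ⟨x, rfl⟩ := hfin.mem_toFinset.1 hDc
    exact ⟨hS _ (centralizer_singleton_ne_top_of_notMem (hw _ hD)),
      centralizer_singleton_ne_of_notMem (hw _ hD)⟩
  obtain ⟨hfi, hle⟩ := finiteIndex_and_card_quotient_le _ _ (centralizerPair_mem hw hS)
    fun _ _ => hFgroup.mk_eq_mk_of_centralizerPair_eq hw
  refine ⟨hfi, hle.trans ?_⟩
  obtain ⟨a, ha⟩ : ∃ a : G, centralizer {a} ≠ ⊤ := by
    by_contra! h
    exact hG fun a b => (mem_center_iff.1 (centralizer_singleton_eq_top_iff.1 (h a)) b).symm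
  have hn : n = S.card + 1 := by
    rw [← hcard, Set.ncard_eq_toFinset_card _ hfin, Finset.card_erase_add_one
      (hfin.mem_toFinset.2 ⟨1, centralizer_singleton_eq_top_iff.2 (one_mem _)⟩)]
  rw [show n - 2 = S.card - 1 by omega]
  exact Finset.card_insert_biUnion_erase_erase_le _ ⟨_, hS a ha⟩ _ hwS
end

section
/- Let G be a non-abelian group with exactly n element centralizers. Then G is an F-group if and only if the collection Π = { Z(x)/Z(G) : x ∈ G \ Z(G) } of subgroups of G/Z(G) (where Z(x) denotes the center of the centralizer C_G(x), which contains Z(G)) is a normal partition of G/Z(G), i.e., every non-identity element of G/Z(G) lies in exactly one member of Π, each member of Π is non-trivial, and Π is closed under conjugation by elements of G/Z(G). -/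
/-- `Z(x)`: the center of the centralizer `C_G(x)`, viewed as a subgroup of `G`. -/
def centerOfCentralizer {G : Type*} [Group G] (x : G) : Subgroup G :=
  (Subgroup.center (Subgroup.centralizer ({x} : Set G))).map
    (Subgroup.centralizer ({x} : Set G)).subtype

lemma mem_cc {G : Type*} [Group G] (x g : G) :
    g ∈ centerOfCentralizer x ↔ Subgroup.centralizer ({x} : Set G) ≤ Subgroup.centralizer {g} := by
  constructor
  · rintro ⟨⟨h, hh⟩, hc, rfl⟩
    intro c hc'
    rw [Subgroup.mem_centralizer_singleton_iff]
    have := Subgroup.mem_center_iff.mp hc ⟨c, hc'⟩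
    exact congrArg Subtype.val this
  · intro hle
    have hgx : g ∈ Subgroup.centralizer ({x} : Set G) := by
      rw [Subgroup.mem_centralizer_singleton_iff]
      have := hle (Subgroup.mem_centralizer_singleton_iff.mpr rfl : x ∈ _)
      exact (Subgroup.mem_centralizer_singleton_iff.mp this).symm
    refine ⟨⟨g, hgx⟩, Subgroup.mem_center_iff.mpr ?_, rfl⟩
    rintro ⟨c, hc⟩
    exact Subtype.ext (Subgroup.mem_centralizer_singleton_iff.mp (hle hc))

lemma center_le_cc {G : Type*} [Group G] (x : G) :
    Subgroup.center G ≤ centerOfCentralizer x := by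
  intro z hz
  rw [mem_cc]
  intro c _
  rw [Subgroup.mem_centralizer_singleton_iff]
  exact Subgroup.mem_center_iff.mp hz c

lemma self_mem_cc {G : Type*} [Group G] (x : G) : x ∈ centerOfCentralizer x :=
  (mem_cc x x).mpr le_rfl

lemma centralizer_mul_center {G : Type*} [Group G] (g z : G) (hz : z ∈ Subgroup.center G) :
    Subgroup.centralizer ({g * z} : Set G) = Subgroup.centralizer {g} := by
  ext c
  simp only [Subgroup.mem_centralizer_singleton_iff]
  have hzc : z * c = c * z := (Subgroup.mem_center_iff.mp hz c).symm
  constructor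
  · intro h
    have : c * g * z = g * c * z := by
      calc c * g * z = c * (g * z) := by rw [mul_assoc]
        _ = g * z * c := h
        _ = g * (c * z) := by rw [mul_assoc, hzc]
        _ = g * c * z := by rw [mul_assoc]
    exact mul_right_cancel this
  · intro h
    calc c * (g * z) = c * g * z := by rw [mul_assoc]
      _ = g * c * z := by rw [h]
      _ = g * (z * c) := by rw [mul_assoc, hzc]
      _ = g * z * c := by rw [mul_assoc]

lemma mem_pi_mk {G : Type*} [Group G] (x g : G) :
    (g : G ⧸ Subgroup.center G) ∈
      (centerOfCentralizer x).map (QuotientGroup.mk' (Subgroup.center G)) ↔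
    g ∈ centerOfCentralizer x := by
  constructor
  · rintro ⟨h, hh, heq⟩
    obtain ⟨z, hz, hzg⟩ := (QuotientGroup.mk'_eq_mk' (Subgroup.center G)).mp heq
    rw [← hzg]
    exact (centerOfCentralizer x).mul_mem hh (center_le_cc x hz)
  · intro h
    exact ⟨g, h, rfl⟩

lemma centralizer_conj {G : Type*} [Group G] (g y c : G) :
    c ∈ Subgroup.centralizer ({g * y * g⁻¹} : Set G) ↔
    g⁻¹ * c * g ∈ Subgroup.centralizer ({y} : Set G) := by
  simp only [Subgroup.mem_centralizer_singleton_iff]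
  constructor
  · intro h
    have := congrArg (fun t => g⁻¹ * t * g) h
    simpa [mul_assoc] using this
  · intro h
    have := congrArg (fun t => g * t * g⁻¹) h
    simpa [mul_assoc] using this

lemma centralizer_conj_le {G : Type*} [Group G] (g x y : G)
    (h : Subgroup.centralizer ({x} : Set G) ≤ Subgroup.centralizer {y}) :
    Subgroup.centralizer ({g * x * g⁻¹} : Set G) ≤ Subgroup.centralizer {g * y * g⁻¹} := by
  intro c hc
  rw [centralizer_conj] at hc ⊢
  exact h hc

lemma cc_conj {G : Type*} [Group G] (g x : G) :
    centerOfCentralizer (g * x * g⁻¹) =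
      (centerOfCentralizer x).map (MulAut.conj g).toMonoidHom := by
  ext a
  rw [mem_cc, Subgroup.mem_map]
  constructor
  · intro h
    refine ⟨g⁻¹ * a * g, (mem_cc _ _).mpr ?_, ?_⟩
    · have := centralizer_conj_le g⁻¹ (g * x * g⁻¹) a h
      simpa [mul_assoc] using this
    · simp [mul_assoc]
  · rintro ⟨b, hb, rfl⟩
    rw [mem_cc] at hb
    have := centralizer_conj_le g x b hb
    simpa [mul_assoc] using this

lemma cc_eq {G : Type*} [Group G] {x y : G}
    (h : Subgroup.centralizer ({x} : Set G) = Subgroup.centralizer {y}) :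
    centerOfCentralizer x = centerOfCentralizer y := by
  ext a; rw [mem_cc, mem_cc, h]

lemma conj_noncentral {G : Type*} [Group G] {x : G} (g : G) (hx : x ∉ Subgroup.center G) :
    g * x * g⁻¹ ∉ Subgroup.center G := by
  intro h
  apply hx
  have := Subgroup.Normal.conj_mem (inferInstance : (Subgroup.center G).Normal) _ h g⁻¹
  simpa [mul_assoc] using this

lemma map_conj_mk {G : Type*} [Group G] (g : G) (H : Subgroup G) :
    (H.map (QuotientGroup.mk' (Subgroup.center G))).map
        (MulAut.conj ((g : G ⧸ Subgroup.center G))).toMonoidHom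
      = (H.map (MulAut.conj g).toMonoidHom).map (QuotientGroup.mk' (Subgroup.center G)) := by
  rw [Subgroup.map_map, Subgroup.map_map]
  congr 1

/-- The collection `Π = { Z(x)/Z(G) : x ∈ G \ Z(G) }` of subgroups of `G/Z(G)`. -/
def PiCollection (G : Type*) [Group G] : Set (Subgroup (G ⧸ Subgroup.center G)) :=
  { S | ∃ x : G, x ∉ Subgroup.center G ∧
      S = (centerOfCentralizer x).map (QuotientGroup.mk' (Subgroup.center G)) }

/-- A non-abelian group `G` with exactly `n` element centralizers is an F-group if and only if
`Π = { Z(x)/Z(G) : x ∈ G \ Z(G) }` is a normal partition of `G/Z(G)`: every non-identity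
element of `G/Z(G)` lies in exactly one member of `Π`, every member of `Π` is non-trivial,
and `Π` is closed under conjugation. -/
theorem stmt5 (G : Type*) [Group G] (hG : ¬∀ a b : G, a * b = b * a) (n : ℕ)
    (hfin : (centSet G).Finite) (hcard : (centSet G).ncard = n) :
    IsFGroup G ↔
      ((∀ g : G ⧸ Subgroup.center G, g ≠ 1 → ∃! S, S ∈ PiCollection G ∧ g ∈ S) ∧
       (∀ S ∈ PiCollection G, S ≠ ⊥) ∧
       (∀ S ∈ PiCollection G, ∀ g : G ⧸ Subgroup.center G,
          S.map (MulAut.conj g).toMonoidHom ∈ PiCollection G)) := by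

  constructor
  · intro hF
    refine ⟨?_, ?_, ?_⟩
    · intro gq hgq
      obtain ⟨g, rfl⟩ := QuotientGroup.mk_surjective gq
      have hg : g ∉ Subgroup.center G := fun h => hgq ((QuotientGroup.eq_one_iff g).mpr h)
      refine ⟨(centerOfCentralizer g).map (QuotientGroup.mk' (Subgroup.center G)),
        ⟨⟨g, hg, rfl⟩, (mem_pi_mk g g).mpr (self_mem_cc g)⟩, ?_⟩
      rintro S ⟨⟨x, hx, rfl⟩, hmem⟩
      rw [mem_pi_mk, mem_cc] at hmem
      exact congrArg _ (cc_eq (hF x g hx hg hmem))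
    · rintro S ⟨x, hx, rfl⟩ hbot
      have hxm := (mem_pi_mk x x).mpr (self_mem_cc x)
      rw [hbot, Subgroup.mem_bot] at hxm
      exact hx ((QuotientGroup.eq_one_iff x).mp hxm)
    · rintro S ⟨x, hx, rfl⟩ gq
      obtain ⟨g, rfl⟩ := QuotientGroup.mk_surjective gq
      refine ⟨g * x * g⁻¹, conj_noncentral g hx, ?_⟩
      rw [map_conj_mk, ← cc_conj]
  · rintro ⟨hpart, -, -⟩ x y hx hy hle
    have hy1 : ((y : G ⧸ Subgroup.center G)) ≠ 1 :=
      fun h => hy ((QuotientGroup.eq_one_iff y).mp h)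
    obtain ⟨S, -, huniq⟩ := hpart _ hy1
    have h1 := huniq ((centerOfCentralizer x).map (QuotientGroup.mk' (Subgroup.center G)))
      ⟨⟨x, hx, rfl⟩, (mem_pi_mk x y).mpr ((mem_cc x y).mpr hle)⟩
    have h2 := huniq ((centerOfCentralizer y).map (QuotientGroup.mk' (Subgroup.center G)))
      ⟨⟨y, hy, rfl⟩, (mem_pi_mk y y).mpr (self_mem_cc y)⟩
    have hxy := h1.trans h2.symm
    have hxmem : ((x : G ⧸ Subgroup.center G)) ∈
        (centerOfCentralizer y).map (QuotientGroup.mk' (Subgroup.center G)) := by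
      rw [← hxy]
      exact (mem_pi_mk x x).mpr (self_mem_cc x)
    rw [mem_pi_mk, mem_cc] at hxmem
    exact le_antisymm hle hxmem
end

section
/- Let G be a non-abelian finite n-centralizer group of conjugate type (p, 1) for a prime p. Then n−2 = p if and only if G/Z(G) is isomorphic to C_p × C_p. -/
set_option linter.unusedSectionVars false

namespace Stmt8Aux

open Subgroup Finset

variable {G : Type*} [Group G] [Finite G] {p : ℕ}

/-- The set of centralizers of non-central elements. -/
def PC (G : Type*) [Group G] : Set (Subgroup G) :=
  {C | ∃ x : G, x ∉ Subgroup.center G ∧ C = Subgroup.centralizer {x}}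

lemma PC_subset_centSet : PC G ⊆ centSet G := by
  rintro C ⟨x, -, rfl⟩; exact ⟨x, rfl⟩

lemma PC_finite : (PC G).Finite :=
  (Set.finite_range _).subset PC_subset_centSet

lemma cent_top_iff {x : G} :
    Subgroup.centralizer {x} = ⊤ ↔ x ∈ Subgroup.center G := by
  rw [Subgroup.centralizer_eq_top_iff_subset, Set.singleton_subset_iff, SetLike.mem_coe]

lemma ne_top_of_memPC {C : Subgroup G} (hC : C ∈ PC G) : C ≠ ⊤ := by
  obtain ⟨x, hx, rfl⟩ := hC
  exact fun h => hx (cent_top_iff.mp h)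

lemma centSet_eq : centSet G = insert ⊤ (PC G) := by
  ext C
  constructor
  · rintro ⟨x, rfl⟩
    by_cases hx : x ∈ Subgroup.center G
    · exact Set.mem_insert_iff.mpr (Or.inl (cent_top_iff.mpr hx))
    · exact Set.mem_insert_iff.mpr (Or.inr ⟨x, hx, rfl⟩)
  · intro h
    rcases Set.mem_insert_iff.mp h with h | h
    · exact ⟨1, by rw [h]; exact cent_top_iff.mpr (one_mem _)⟩
    · exact PC_subset_centSet h

lemma centSet_ncard : (centSet G).ncard = (PC G).ncard + 1 := by
  rw [centSet_eq,
    Set.ncard_insert_of_notMem (fun h => ne_top_of_memPC h rfl) PC_finite]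

lemma index_of_memPC
    (htype : ∀ x : G, x ∉ Subgroup.center G → (Subgroup.centralizer {x}).index = p)
    {C : Subgroup G} (hC : C ∈ PC G) : C.index = p := by
  obtain ⟨x, hx, rfl⟩ := hC; exact htype x hx

lemma card_of_memPC
    (htype : ∀ x : G, x ∉ Subgroup.center G → (Subgroup.centralizer {x}).index = p)
    {C : Subgroup G} (hC : C ∈ PC G) :
    Nat.card C * p = Nat.card G := by
  rw [← index_of_memPC htype hC]; exact Subgroup.card_mul_index C

lemma center_le_of_memPC {C : Subgroup G} (hC : C ∈ PC G) :
    Subgroup.center G ≤ C := by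
  obtain ⟨x, hx, rfl⟩ := hC; exact Subgroup.center_le_centralizer _

lemma self_mem_centralizer (x : G) : x ∈ Subgroup.centralizer {x} :=
  Subgroup.mem_centralizer_singleton_iff.mpr rfl

lemma card_coe [Fintype G] (H : Subgroup G) [Fintype (H : Set G)] :
    (H : Set G).toFinset.card = Nat.card H := by
  rw [Set.toFinset_card]
  exact (Nat.card_eq_fintype_card (α := (H : Set G))).symm

/-- Partition count: if the proper centralizers pairwise intersect in the center,
the sets `C \ Z` partition `G \ Z`. -/
lemma partition_count
    (hpair : ∀ C ∈ PC G, ∀ D ∈ PC G, C ≠ D → C ⊓ D = Subgroup.center G) :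
    ∑ C ∈ (PC_finite (G := G)).toFinset,
        (Nat.card C - Nat.card (Subgroup.center G))
      = Nat.card G - Nat.card (Subgroup.center G) := by
  classical
  letI : Fintype G := Fintype.ofFinite G
  set Z := Subgroup.center G with hZ
  set Zf := (Z : Set G).toFinset with hZf
  set f : Subgroup G → Finset G := fun C => (C : Set G).toFinset \ Zf with hf
  set P := (PC_finite (G := G)).toFinset with hP
  have hmemP : ∀ C, C ∈ P ↔ C ∈ PC G := fun C => Set.Finite.mem_toFinset _
  have hU : P.biUnion f = Finset.univ \ Zf := by
    ext y
    simp only [Finset.mem_biUnion, Finset.mem_sdiff, Finset.mem_univ, true_and, hf,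
      Set.mem_toFinset]
    constructor
    · rintro ⟨C, hC, hyC, hyZ⟩
      exact fun h => hyZ h
    · intro hyZ
      have hyZ' : y ∉ Z := fun h => hyZ (by rwa [hZf, Set.mem_toFinset])
      refine ⟨Subgroup.centralizer {y}, (hmemP _).mpr ⟨y, hyZ', rfl⟩, ?_, hyZ⟩
      exact self_mem_centralizer y
  have hdisj : ∀ C ∈ P, ∀ D ∈ P, C ≠ D → Disjoint (f C) (f D) := by
    intro C hC D hD hCD
    rw [Finset.disjoint_left]
    intro y hyC hyD
    rw [hf] at hyC hyD
    simp only [Finset.mem_sdiff, Set.mem_toFinset] at hyC hyD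
    have hym : y ∈ C ⊓ D := Subgroup.mem_inf.mpr ⟨hyC.1, hyD.1⟩
    rw [hpair C ((hmemP _).mp hC) D ((hmemP _).mp hD) hCD] at hym
    exact hyC.2 (by rw [hZf, Set.mem_toFinset]; exact hym)
  have hZsub : ∀ C ∈ P, Zf ⊆ (C : Set G).toFinset := by
    intro C hC x hx
    rw [Set.mem_toFinset]
    exact center_le_of_memPC ((hmemP _).mp hC) (by rwa [hZf, Set.mem_toFinset] at hx)
  have hterm : ∀ C ∈ P, (f C).card = Nat.card C - Nat.card Z := by
    intro C hC
    rw [hf]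
    simp only
    rw [Finset.card_sdiff_of_subset (hZsub C hC), card_coe, hZf, card_coe]
  have htot : (Finset.univ \ Zf).card = Nat.card G - Nat.card Z := by
    rw [Finset.card_sdiff_of_subset (Finset.subset_univ _), Finset.card_univ, hZf, card_coe,
      ← Nat.card_eq_fintype_card]
  calc ∑ C ∈ P, (Nat.card C - Nat.card Z)
      = ∑ C ∈ P, (f C).card := Finset.sum_congr rfl fun C hC => (hterm C hC).symm
    _ = (P.biUnion f).card := (Finset.card_biUnion hdisj).symm
    _ = (Finset.univ \ Zf).card := by rw [hU]
    _ = Nat.card G - Nat.card Z := htot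

/-- The key covering lemma: with exactly `p+1` proper centralizers of index `p`,
the intersection of two distinct ones is contained in any of them. -/
lemma inter_le (hp : p.Prime)
    (htype : ∀ x : G, x ∉ Subgroup.center G → (Subgroup.centralizer {x}).index = p)
    (hk : (PC G).ncard = p + 1) :
    ∀ C ∈ PC G, ∀ D ∈ PC G, C ≠ D → ∀ E ∈ PC G, C ⊓ D ≤ E := by
  classical
  letI : Fintype G := Fintype.ofFinite G
  intro C hC D hD hCD E hE
  by_cases hEC : E = C
  · rw [hEC]; exact inf_le_left
  by_cases hED : E = D
  · rw [hED]; exact inf_le_right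
  intro x hx
  by_contra hxE
  obtain ⟨hxC, hxD⟩ := Subgroup.mem_inf.mp hx
  set Ef := (E : Set G).toFinset with hEf
  set f : Subgroup G → Finset G := fun H => (H : Set G).toFinset \ Ef with hf
  set P := (PC_finite (G := G)).toFinset with hP
  have hmemP : ∀ H, H ∈ P ↔ H ∈ PC G := fun H => Set.Finite.mem_toFinset _
  have hPcard : P.card = p + 1 := by
    rw [← hk, Set.ncard_eq_toFinset_card _ (PC_finite (G := G))]
  set R := P.erase E with hR
  have hRcard : R.card = p := by
    rw [hR, Finset.card_erase_of_mem ((hmemP E).mpr hE), hPcard]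
    omega
  have hcardE : Nat.card E * p = Nat.card G := card_of_memPC htype hE
  have hEpos : 0 < Nat.card E := Nat.card_pos
  -- coverage
  have hcov : Finset.univ \ Ef ⊆ R.biUnion f := by
    intro y hy
    rw [Finset.mem_sdiff] at hy
    have hyE : y ∉ E := fun h => hy.2 (by rw [hEf, Set.mem_toFinset]; exact h)
    have hyc : y ∉ Subgroup.center G := fun h => hyE (center_le_of_memPC hE h)
    refine Finset.mem_biUnion.mpr ⟨Subgroup.centralizer {y}, ?_, ?_⟩
    · refine Finset.mem_erase.mpr ⟨?_, (hmemP _).mpr ⟨y, hyc, rfl⟩⟩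
      intro h
      exact hyE (h ▸ self_mem_centralizer y)
    · rw [hf]
      simp only [Finset.mem_sdiff, Set.mem_toFinset]
      exact ⟨self_mem_centralizer y, hy.2⟩
  -- per-subgroup bound
  have hHbound : ∀ H ∈ R, p * (f H).card ≤ (p - 1) * Nat.card E := by
    intro H hH
    have hHP : H ∈ PC G := (hmemP _).mp (Finset.mem_of_mem_erase hH)
    have hcardH : Nat.card H * p = Nat.card G := card_of_memPC htype hHP
    have hHE : Nat.card H = Nat.card E :=
      Nat.eq_of_mul_eq_mul_right hp.pos (hcardH.trans hcardE.symm)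
    have hinf : Nat.card ↥(H ⊓ E) * (H ⊓ E).index = Nat.card G :=
      Subgroup.card_mul_index _
    have hidx : (H ⊓ E).index ≤ p * p := by
      calc (H ⊓ E).index ≤ H.index * E.index := Subgroup.index_inf_le
        _ = p * p := by rw [index_of_memPC htype hHP, index_of_memPC htype hE]
    have hbE : Nat.card G ≤ Nat.card ↥(H ⊓ E) * (p * p) := by
      calc Nat.card G = Nat.card ↥(H ⊓ E) * (H ⊓ E).index := hinf.symm
        _ ≤ Nat.card ↥(H ⊓ E) * (p * p) := Nat.mul_le_mul_left _ hidx
    have hba : Nat.card ↥(H ⊓ E) ≤ Nat.card H :=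
      Subgroup.card_le_of_le inf_le_left
    have hapb : Nat.card H ≤ p * Nat.card ↥(H ⊓ E) := by
      have h1 : Nat.card H * p ≤ (p * Nat.card ↥(H ⊓ E)) * p := by
        rw [hcardH]
        calc Nat.card G ≤ Nat.card ↥(H ⊓ E) * (p * p) := hbE
          _ = p * Nat.card ↥(H ⊓ E) * p := by ring
      exact Nat.le_of_mul_le_mul_right h1 hp.pos
    have h2 : ((H ⊓ E : Subgroup G) : Set G).toFinset = (H : Set G).toFinset ∩ Ef := by
      rw [hEf, Subgroup.coe_inf, Set.toFinset_inter]
    have hfcard : (f H).card = Nat.card H - Nat.card ↥(H ⊓ E) := by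
      have h1 : ((H : Set G).toFinset \ Ef).card + ((H : Set G).toFinset ∩ Ef).card
          = (H : Set G).toFinset.card := Finset.card_sdiff_add_card_inter _ _
      rw [← h2, card_coe, card_coe] at h1
      rw [hf]
      simp only
      omega
    rw [hfcard, hHE]
    -- p * (cardE - b) ≤ (p-1) * cardE  given  cardE ≤ p * b
    rw [hHE] at hba hapb
    zify [hba, hp.one_le]
    nlinarith [hapb, hba]
  -- sum bound
  have hsum' : ∑ H ∈ R, (f H).card ≤ (p - 1) * Nat.card E := by
    have hsum : p * ∑ H ∈ R, (f H).card ≤ p * ((p - 1) * Nat.card E) := by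
      rw [Finset.mul_sum]
      calc ∑ H ∈ R, p * (f H).card ≤ ∑ _H ∈ R, (p - 1) * Nat.card E :=
            Finset.sum_le_sum hHbound
        _ = p * ((p - 1) * Nat.card E) := by
            rw [Finset.sum_const, hRcard, smul_eq_mul]
    exact Nat.le_of_mul_le_mul_left hsum hp.pos
  -- union lower bound
  have hUcard : (p - 1) * Nat.card E ≤ (R.biUnion f).card := by
    have h1 : (Finset.univ \ Ef).card = Nat.card G - Nat.card E := by
      rw [Finset.card_sdiff_of_subset (Finset.subset_univ _), Finset.card_univ, hEf, card_coe,
        ← Nat.card_eq_fintype_card]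
    have h2 := Finset.card_le_card hcov
    have h3 : (p - 1) * Nat.card E = Nat.card G - Nat.card E := by
      have := hp.one_le
      calc (p - 1) * Nat.card E = p * Nat.card E - Nat.card E := by
            rw [Nat.sub_one_mul]
        _ = Nat.card G - Nat.card E := by rw [mul_comm, hcardE]
    omega
  -- membership facts for x, C, D
  have hCR : C ∈ R := Finset.mem_erase.mpr ⟨fun h => hEC h.symm, (hmemP _).mpr hC⟩
  have hDR : D ∈ R := Finset.mem_erase.mpr ⟨fun h => hED h.symm, (hmemP _).mpr hD⟩
  have hxfC : x ∈ f C := by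
    rw [hf]; simp only [Finset.mem_sdiff, Set.mem_toFinset]
    exact ⟨hxC, fun h => hxE (by rwa [hEf, Set.mem_toFinset] at h)⟩
  have hxfD : x ∈ f D := by
    rw [hf]; simp only [Finset.mem_sdiff, Set.mem_toFinset]
    exact ⟨hxD, fun h => hxE (by rwa [hEf, Set.mem_toFinset] at h)⟩
  -- refined subset relation
  have hsub : R.biUnion f ⊆ ((R.erase D).biUnion f) ∪ ((f D).erase x) := by
    intro y hy
    obtain ⟨H, hH, hyH⟩ := Finset.mem_biUnion.mp hy
    by_cases hHD : H = D
    · subst hHD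
      by_cases hyx : y = x
      · subst hyx
        exact Finset.mem_union_left _
          (Finset.mem_biUnion.mpr ⟨C, Finset.mem_erase.mpr ⟨hCD, hCR⟩, hxfC⟩)
      · exact Finset.mem_union_right _ (Finset.mem_erase.mpr ⟨hyx, hyH⟩)
    · exact Finset.mem_union_left _
        (Finset.mem_biUnion.mpr ⟨H, Finset.mem_erase.mpr ⟨hHD, hH⟩, hyH⟩)
  -- final contradiction
  have hfinal : (R.biUnion f).card ≤ (∑ H ∈ R, (f H).card) - 1 := by
    have c1 : (R.biUnion f).card ≤ ((R.erase D).biUnion f).card + ((f D).erase x).card :=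
      (Finset.card_le_card hsub).trans (Finset.card_union_le _ _)
    have c2 : ((R.erase D).biUnion f).card ≤ ∑ H ∈ R.erase D, (f H).card :=
      Finset.card_biUnion_le
    have c3 : ((f D).erase x).card = (f D).card - 1 :=
      Finset.card_erase_of_mem hxfD
    have c4 : (∑ H ∈ R.erase D, (f H).card) + (f D).card = ∑ H ∈ R, (f H).card :=
      Finset.sum_erase_add _ _ hDR
    have c5 : 1 ≤ (f D).card := Finset.card_pos.mpr ⟨x, hxfD⟩
    omega
  have hq1 : 1 ≤ ∑ H ∈ R, (f H).card := by
    have : 1 ≤ (f D).card := Finset.card_pos.mpr ⟨x, hxfD⟩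
    calc 1 ≤ (f D).card := this
      _ ≤ ∑ H ∈ R, (f H).card := Finset.single_le_sum (f := fun H => (f H).card) (fun _ _ => Nat.zero_le _) hDR
  set q := (p - 1) * Nat.card E with hq
  omega

/-- A non-cyclic group of order `p * p` is isomorphic to `C_p × C_p`. -/
lemma iso_lemma {Q : Type*} [Group Q] [Finite Q] (hp : p.Prime)
    (hcard : Nat.card Q = p * p) (hnc : ¬ IsCyclic Q) :
    Nonempty (Q ≃* Multiplicative (ZMod p) × Multiplicative (ZMod p)) := by
  classical
  haveI : Fact p.Prime := ⟨hp⟩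
  have hcomm : ∀ a b : Q, a * b = b * a :=
    IsPGroup.commutative_of_card_eq_prime_sq (by rw [hcard, sq])
  have horder : ∀ x : Q, x ≠ 1 → orderOf x = p := by
    intro x hx
    have hdvd : orderOf x ∣ p ^ 2 := by rw [sq, ← hcard]; exact orderOf_dvd_natCard x
    obtain ⟨i, hi, hoi⟩ := (Nat.dvd_prime_pow hp).mp hdvd
    interval_cases i
    · rw [pow_zero] at hoi; exact absurd (orderOf_eq_one_iff.mp hoi) hx
    · rwa [pow_one] at hoi
    · exact absurd (isCyclic_of_orderOf_eq_card x (by rw [hcard, hoi, sq])) hnc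
  have hnt : Nontrivial Q := by
    rw [← Finite.one_lt_card_iff_nontrivial, hcard]
    nlinarith [hp.two_le]
  obtain ⟨a, ha⟩ := exists_ne (1 : Q)
  set A := Subgroup.zpowers a with hA
  have hcardA : Nat.card A = p := by rw [hA, Nat.card_zpowers, horder a ha]
  have hbex : ∃ b : Q, b ∉ A := by
    by_contra h
    push_neg at h
    have htop : A = ⊤ := (Subgroup.eq_top_iff' A).mpr h
    have h2 : Nat.card A = Nat.card Q := by
      rw [htop]
      exact Nat.card_congr Subgroup.topEquiv.toEquiv
    rw [hcardA, hcard] at h2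
    nlinarith [hp.two_le]
  obtain ⟨b, hb⟩ := hbex
  have hb1 : b ≠ 1 := fun h => hb (h ▸ one_mem A)
  set B := Subgroup.zpowers b with hB
  have hcardB : Nat.card B = p := by rw [hB, Nat.card_zpowers, horder b hb1]
  have hbB : b ∈ B := Subgroup.mem_zpowers b
  have hAB : A ⊓ B = ⊥ := by
    have hdvd : Nat.card ↥(A ⊓ B) ∣ p := hcardB ▸ Subgroup.card_dvd_of_le inf_le_right
    rcases hp.eq_one_or_self_of_dvd _ hdvd with h | h
    · exact Subgroup.card_eq_one.mp h
    · exfalso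
      have heq : A ⊓ B = B :=
        Subgroup.eq_of_le_of_card_ge inf_le_right (by rw [h, hcardB])
      have : b ∈ A ⊓ B := by rw [heq]; exact hbB
      exact hb (Subgroup.mem_inf.mp this).1
  have key : ∀ w x y z : Q, w * x * (y * z) = w * y * (x * z) := by
    intro w x y z
    rw [mul_assoc, mul_assoc, ← mul_assoc x, hcomm x y, mul_assoc]
  let φ : (A × B) →* Q :=
  { toFun := fun x => (x.1 : Q) * (x.2 : Q)
    map_one' := by simp
    map_mul' := by
      rintro ⟨x1, y1⟩ ⟨x2, y2⟩
      simp only [Prod.mk_mul_mk, Subgroup.coe_mul]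
      exact key _ _ _ _ }
  have hinj : Function.Injective φ := by
    rw [injective_iff_map_eq_one]
    rintro ⟨x, y⟩ h
    have h' : (x : Q) * (y : Q) = 1 := h
    have hxB : (x : Q) ∈ B := by
      have hxy : (x : Q) = (y : Q)⁻¹ := eq_inv_of_mul_eq_one_left h'
      rw [hxy]; exact inv_mem y.2
    have hx1 : (x : Q) ∈ A ⊓ B := Subgroup.mem_inf.mpr ⟨x.2, hxB⟩
    rw [hAB, Subgroup.mem_bot] at hx1
    have hy1 : (y : Q) = 1 := by rw [hx1, one_mul] at h'; exact h'
    rw [Prod.mk_eq_one]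
    exact ⟨Subtype.ext hx1, Subtype.ext hy1⟩
  have hcards : Nat.card (↥A × ↥B) = Nat.card Q := by
    rw [Nat.card_prod, hcardA, hcardB, hcard]
  have hbij : Function.Bijective φ :=
    (Nat.bijective_iff_injective_and_card φ).mpr ⟨hinj, hcards⟩
  have hzm : Nat.card (Multiplicative (ZMod p)) = p := by
    rw [Nat.card_congr Multiplicative.toAdd, Nat.card_zmod]
  haveI : IsCyclic (↥A) := isCyclic_of_prime_card hcardA
  haveI : IsCyclic (↥B) := isCyclic_of_prime_card hcardB
  haveI : IsCyclic (Multiplicative (ZMod p)) := isCyclic_of_prime_card hzm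
  let eA : ↥A ≃* Multiplicative (ZMod p) := mulEquivOfCyclicCardEq (by rw [hcardA, hzm])
  let eB : ↥B ≃* Multiplicative (ZMod p) := mulEquivOfCyclicCardEq (by rw [hcardB, hzm])
  exact ⟨(MulEquiv.ofBijective φ hbij).symm.trans (eA.prodCongr eB)⟩

end Stmt8Aux

open Stmt8Aux

/-- For a non-abelian finite `n`-centralizer group of conjugate type `(p, 1)` (`p` prime),
`n - 2 = p` iff `G/Z(G) ≅ C_p × C_p`. -/
theorem stmt8 (G : Type*) [Group G] [Finite G]
    (hG : ¬∀ a b : G, a * b = b * a) (n p : ℕ) (hp : p.Prime)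
    (htype : ∀ x : G, x ∉ Subgroup.center G → (Subgroup.centralizer {x}).index = p)
    (hcard : (centSet G).ncard = n) :
    n - 2 = p ↔
      Nonempty ((G ⧸ Subgroup.center G) ≃*
        (Multiplicative (ZMod p) × Multiplicative (ZMod p))) := by
  classical
  have hcs : n = (PC G).ncard + 1 := by rw [← hcard, centSet_ncard]
  set z := Nat.card (Subgroup.center G) with hzdef
  set g := Nat.card G with hgdef
  have hzpos : 0 < z := Nat.card_pos
  have hgq : g = Nat.card (G ⧸ Subgroup.center G) * z :=
    Subgroup.card_eq_card_quotient_mul_card_subgroup _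
  set P := (PC_finite (G := G)).toFinset with hPd
  have hPmem : ∀ C, C ∈ P ↔ C ∈ PC G := fun C => Set.Finite.mem_toFinset _
  have hPcard : P.card = (PC G).ncard :=
    (Set.ncard_eq_toFinset_card _ (PC_finite (G := G))).symm
  constructor
  · -- n - 2 = p → iso
    intro hn2
    have hk : (PC G).ncard = p + 1 := by have := hp.two_le; omega
    have hpair : ∀ C ∈ PC G, ∀ D ∈ PC G, C ≠ D → C ⊓ D = Subgroup.center G := by
      intro C hC D hD hCD
      apply le_antisymm
      · intro x hx
        rw [Subgroup.mem_center_iff]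
        intro y
        by_cases hy : y ∈ Subgroup.center G
        · exact (Subgroup.mem_center_iff.mp hy x).symm
        · have hyPC : Subgroup.centralizer {y} ∈ PC G := ⟨y, hy, rfl⟩
          have hxy : x ∈ Subgroup.centralizer {y} :=
            inter_le hp htype hk C hC D hD hCD _ hyPC hx
          exact (Subgroup.mem_centralizer_singleton_iff.mp hxy).symm
      · exact le_inf (center_le_of_memPC hC) (center_le_of_memPC hD)
    have hpart := partition_count hpair
    have hPcard' : P.card = p + 1 := by rw [hPcard, hk]
    have hterm : ∀ C ∈ P, p * (Nat.card C - z) = g - p * z := by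
      intro C hCp
      have hCpc : C ∈ PC G := (hPmem C).mp hCp
      have h1 : Nat.card C * p = g := card_of_memPC htype hCpc
      have h1' : (Nat.card C : ℤ) * p = g := by exact_mod_cast h1
      have h2 : z ≤ Nat.card C := Subgroup.card_le_of_le (center_le_of_memPC hCpc)
      have h3 : p * z ≤ g := by
        calc p * z ≤ p * Nat.card C := Nat.mul_le_mul_left _ h2
          _ = g := by rw [mul_comm]; exact h1
      zify [h2, h3]
      linear_combination h1'
    -- some proper centralizer exists
    have hPne : P.Nonempty := by
      rw [← Finset.card_pos, hPcard']; omega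
    obtain ⟨C₀, hC₀⟩ := hPne
    have h2C : z ≤ Nat.card C₀ :=
      Subgroup.card_le_of_le (center_le_of_memPC ((hPmem _).mp hC₀))
    have h1C : Nat.card C₀ * p = g := card_of_memPC htype ((hPmem _).mp hC₀)
    have hpzg : p * z ≤ g := by
      calc p * z ≤ p * Nat.card C₀ := Nat.mul_le_mul_left _ h2C
        _ = g := by rw [mul_comm]; exact h1C
    have hzg : z ≤ g := le_trans (Nat.le_mul_of_pos_left _ hp.pos) hpzg
    have hmul : p * (g - z) = (p + 1) * (g - p * z) := by
      calc p * (g - z) = p * ∑ C ∈ P, (Nat.card C - z) := by rw [hpart]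
        _ = ∑ C ∈ P, p * (Nat.card C - z) := by rw [Finset.mul_sum]
        _ = ∑ _C ∈ P, (g - p * z) := Finset.sum_congr rfl hterm
        _ = (p + 1) * (g - p * z) := by rw [Finset.sum_const, hPcard', smul_eq_mul]
    have hgppz : g = p * p * z := by
      zify [hzg, hpzg] at hmul
      have : (g : ℤ) = p * p * z := by linear_combination -hmul
      exact_mod_cast this
    have hq : Nat.card (G ⧸ Subgroup.center G) = p * p := by
      have : Nat.card (G ⧸ Subgroup.center G) * z = (p * p) * z := by
        rw [← hgq, hgppz]
      exact Nat.eq_of_mul_eq_mul_right hzpos this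
    have hnc : ¬ IsCyclic (G ⧸ Subgroup.center G) := by
      intro hcyc
      exact hG (commutative_of_cyclic_center_quotient (QuotientGroup.mk' (Subgroup.center G))
        (by rw [QuotientGroup.ker_mk']))
    exact iso_lemma hp hq hnc
  · -- iso → n - 2 = p
    rintro ⟨e⟩
    have hq : Nat.card (G ⧸ Subgroup.center G) = p * p := by
      rw [Nat.card_congr e.toEquiv, Nat.card_prod,
        Nat.card_congr Multiplicative.toAdd, Nat.card_zmod]
    have hgppz : g = p * p * z := by rw [hgq, hq]
    have hcardC : ∀ C ∈ PC G, Nat.card C = p * z := by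
      intro C hC
      have h1 : Nat.card C * p = g := card_of_memPC htype hC
      apply Nat.eq_of_mul_eq_mul_right hp.pos
      rw [h1, hgppz]; ring
    have hpair : ∀ C ∈ PC G, ∀ D ∈ PC G, C ≠ D → C ⊓ D = Subgroup.center G := by
      intro C hC D hD hCD
      have hle : Subgroup.center G ≤ C ⊓ D :=
        le_inf (center_le_of_memPC hC) (center_le_of_memPC hD)
      have hzb : z ∣ Nat.card ↥(C ⊓ D) := Subgroup.card_dvd_of_le hle
      have hbpz : Nat.card ↥(C ⊓ D) ∣ p * z := by
        rw [← hcardC C hC]; exact Subgroup.card_dvd_of_le inf_le_left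
      obtain ⟨d, hd⟩ := hzb
      have hdp : d ∣ p := by
        have : z * d ∣ z * p := by rw [← hd, mul_comm z p]; exact hbpz
        exact (mul_dvd_mul_iff_left hzpos.ne').mp this
      rcases hp.eq_one_or_self_of_dvd _ hdp with h | h
      · subst h
        rw [mul_one] at hd
        exact (Subgroup.eq_of_le_of_card_ge hle (le_of_eq hd)).symm
      · exfalso
        subst h
        have hCD' : C ⊓ D = C := by
          apply Subgroup.eq_of_le_of_card_ge inf_le_left
          rw [hcardC C hC, hd]; ring_nf; omega
        have hCleD : C ≤ D := by rw [← hCD']; exact inf_le_right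
        exact hCD (Subgroup.eq_of_le_of_card_ge hCleD
          (by rw [hcardC C hC, hcardC D hD]))
    have hpart := partition_count hpair
    have hterm : ∀ C ∈ P, Nat.card C - z = p * z - z := by
      intro C hCp
      rw [hcardC C ((hPmem C).mp hCp)]
    have hsum : P.card * (p * z - z) = g - z := by
      rw [← hpart]
      rw [Finset.sum_congr rfl hterm, Finset.sum_const, smul_eq_mul]
    have hgz' : g - z = (p + 1) * (p * z - z) := by
      have h1 : z ≤ p * z := Nat.le_mul_of_pos_left _ hp.pos
      have h2 : z ≤ g := by
        rw [hgppz]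
        calc z ≤ p * z := h1
          _ ≤ p * (p * z) := Nat.le_mul_of_pos_left _ hp.pos
          _ = p * p * z := by ring
      zify [h1, h2]
      have : (g : ℤ) = p * p * z := by exact_mod_cast hgppz
      linear_combination this
    have hwpos : 0 < p * z - z := by
      have : z < p * z := by
        have := hp.two_le
        calc z = 1 * z := (one_mul z).symm
          _ < p * z := Nat.mul_lt_mul_of_lt_of_le (by omega) le_rfl hzpos
      omega
    have hPcard' : P.card = p + 1 := by
      apply Nat.eq_of_mul_eq_mul_right hwpos
      rw [hsum, hgz']
    have := hp.two_le
    rw [hcs, ← hPcard, hPcard']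
    omega
end

section
/- Let G be a non-abelian finite group with trivial center and let q be the largest prime divisor of |G|. Then |Cent(G)| ≥ q + 2. -/
open Subgroup ConjAct Function
open scoped Pointwise

section

variable {G : Type*} [Group G]

theorem commute_conj_of_forall_commute_conj {x : G} (h : ∀ z, Commute z (x * z * x⁻¹))
    (g : G) : Commute x (g * x * g⁻¹) := by
  set c := x * g * x⁻¹ * g⁻¹ with hc
  -- the hypothesis at `g` and at `x * g` says that `g` and `g * x` both commute with `c`
  have hgc : Commute g c := by
    simpa only [hc, mul_assoc] using (h g).mul_right (Commute.refl g).inv_right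
  have hgxc : Commute (g * x) c := by
    have hxg : x * g = c * (g * x) := by rw [hc]; group
    have : Commute (g * x) (x * g) := by simpa [mul_assoc] using (h (x * g)).conj x⁻¹
    rw [hxg] at this
    simpa [mul_assoc] using this.mul_right (Commute.refl (g * x)).inv_right
  have hxc : Commute x c := by simpa using hgc.inv_left.mul_left hgxc
  have hcx : c⁻¹ * x = g * x * g⁻¹ := by rw [hc]; group
  simpa [hcx] using hxc.inv_right.mul_right (Commute.refl x)

theorem commute_of_coprime_of_forall_commute_conj {x y : G} {n : ℕ}
    (h : ∀ z, Commute z (x * z * x⁻¹)) (hxn : x ^ n = 1) (hy : (orderOf y).Coprime n) :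
    Commute x y := by
  set w := y⁻¹ * x * y * x⁻¹ with hw
  -- the order of `w` divides both `n` and `orderOf y`
  have hyw : y * w = x * y * x⁻¹ := by rw [hw]; group
  have hwy : Commute y w := by
    have hw' : w = y⁻¹ * (x * y * x⁻¹) := by rw [hw]; group
    rw [hw']
    exact (Commute.refl y).inv_right.mul_right (h y)
  have hwn : w ^ n = 1 := by
    have hconj : Commute (y⁻¹ * x * y) x⁻¹ := by
      simpa using (commute_conj_of_forall_commute_conj h y⁻¹).symm.inv_right
    have hpow := conj_pow (i := n) (a := y⁻¹) (b := x)
    rw [inv_inv, hxn] at hpow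
    rw [hw, hconj.mul_pow, hpow, inv_pow, hxn]
    group
  have hwo : w ^ orderOf y = 1 := by
    simpa [hwy.mul_pow, conj_pow] using congrArg (· ^ orderOf y) hyw
  have hw1 : w = 1 := by
    simpa [Nat.Coprime.gcd_eq_one hy] using pow_gcd_eq_one.mpr ⟨hwo, hwn⟩
  rw [hw1, mul_one] at hyw
  exact (eq_mul_inv_iff_mul_eq.mp hyw).symm

theorem normalClosure_le_centralizer_of_coprime {x y : G} {n : ℕ}
    (h : ∀ z, Commute z (x * z * x⁻¹)) (hxn : x ^ n = 1) (hy : (orderOf y).Coprime n) :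
    normalClosure {x} ≤ centralizer {y} := by
  refine (closure_le _).mpr fun c hc => ?_
  obtain ⟨g, rfl⟩ : ∃ g, g * x * g⁻¹ = c := by
    simpa [isConj_iff] using Group.mem_conjugatesOfSet_iff.mp hc
  have hy' : (orderOf (g⁻¹ * y * g⁻¹⁻¹)).Coprime n := by
    rwa [← MulAut.conj_apply, MulEquiv.orderOf_eq]
  have := (commute_of_coprime_of_forall_commute_conj h hxn hy').conj g
  exact mem_centralizer_singleton_iff.mpr (by simpa [mul_assoc] using this.eq)

theorem Sylow.exists_ne_one_mem_normal_le_centralizer {p : ℕ} [Fact p.Prime] [Finite G]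
    (P : Sylow p G) (N : Subgroup G) [N.Normal] (hN : p ∣ Nat.card N) :
    ∃ a ∈ N, a ≠ 1 ∧ (P : Subgroup G) ≤ centralizer {a} := by
  let Q : Subgroup (ConjAct G) := (P : Subgroup G).map (toConjAct : G ≃* ConjAct G).toMonoidHom
  have hQ : IsPGroup p Q := P.isPGroup'.map _
  have hfix : (1 : N) ∈ MulAction.fixedPoints Q N := fun g => smul_one g
  obtain ⟨b, hb, hb1⟩ := hQ.exists_fixed_point_of_prime_dvd_card_of_fixed_point N hN hfix
  refine ⟨b, b.2, fun h => hb1 (Subtype.ext h.symm), fun g hg => ?_⟩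
  have hgb : g * b * g⁻¹ = b := congrArg Subtype.val (hb ⟨toConjAct g, mem_map_of_mem _ hg⟩)
  exact mem_centralizer_singleton_iff.mpr (mul_inv_eq_iff_eq_mul.mp hgb)

theorem Subgroup.eq_top_of_forall_exists_sylow_le [Finite G] {H : Subgroup G}
    (h : ∀ r, r.Prime → ∃ Q : Sylow r G, (Q : Subgroup G) ≤ H) : H = ⊤ := by
  by_contra hH
  obtain ⟨r, hr, hrH⟩ := Nat.exists_prime_and_dvd (mt index_eq_one.mp hH)
  have : Fact r.Prime := ⟨hr⟩
  obtain ⟨Q, hQ⟩ := h r hr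
  exact Q.not_dvd_index (hrH.trans (index_dvd_of_le hQ))

theorem exists_not_commute_conj_of_center_eq_bot [Finite G] (hZ : center G = ⊥) {p : ℕ}
    (hp : p.Prime) {x : G} (hx : orderOf x = p) : ∃ y, ¬Commute y (x * y * x⁻¹) := by
  by_contra! h
  have : Fact p.Prime := ⟨hp⟩
  have hxp : x ^ p = 1 := hx ▸ pow_orderOf_eq_one x
  have hpA : p ∣ Nat.card (normalClosure {x}) := by
    simpa [hx] using orderOf_dvd_natCard (⟨x, subset_normalClosure rfl⟩ : normalClosure {x})
  obtain ⟨P⟩ : Nonempty (Sylow p G) := inferInstance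
  obtain ⟨a, haA, ha1, hPa⟩ := P.exists_ne_one_mem_normal_le_centralizer _ hpA
  have htop : centralizer {a} = ⊤ := eq_top_of_forall_exists_sylow_le fun r hr => by
    obtain rfl | hrp := eq_or_ne r p
    · exact ⟨P, hPa⟩
    have : Fact r.Prime := ⟨hr⟩
    obtain ⟨Q⟩ : Nonempty (Sylow r G) := inferInstance
    refine ⟨Q, fun g hg => ?_⟩
    have hg : (orderOf g).Coprime p := by
      simpa using Q.isPGroup'.orderOf_coprime ((Nat.coprime_primes hr hp).mpr hrp) ⟨g, hg⟩
    exact mem_centralizer_singleton_iff.mpr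
      (mem_centralizer_singleton_iff.mp (normalClosure_le_centralizer_of_coprime h hxp hg haA)).symm
  apply ha1
  rw [← mem_bot, ← hZ, mem_center_iff]
  exact fun g => mem_centralizer_singleton_iff.mp (htop ▸ mem_top g)

theorem centralizer_conj_s14 (g y : G) :
    centralizer {g * y * g⁻¹} = toConjAct g • centralizer {y} := by
  ext z
  rw [mem_pointwise_smul_iff_inv_smul_mem, ← map_inv, toConjAct_smul, inv_inv,
    mem_centralizer_singleton_iff, mem_centralizer_singleton_iff, ← commute_iff_eq,
    ← commute_iff_eq, ← Commute.conj_iff g⁻¹]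
  simp [mul_assoc]

theorem injOn_centralizer_conj_pow {x y : G} {q : ℕ} (hq : q.Prime) (hxq : x ^ q = 1)
    (hy : ¬Commute y (x * y * x⁻¹)) :
    Set.InjOn (fun n : ℕ => centralizer {x ^ n * y * (x ^ n)⁻¹}) (Set.Iio q) := by
  have : Fact q.Prime := ⟨hq⟩
  set f : Subgroup G → Subgroup G := (toConjAct x • ·)
  have hper : minimalPeriod f (centralizer {y}) = q := by
    refine minimalPeriod_eq_prime ?_ fun hfix => hy ?_
    · rw [IsPeriodicPt, IsFixedPt, smul_iterate, ← map_pow, hxq, map_one]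
      exact one_smul _ _
    · have := smul_mem_pointwise_smul y (toConjAct x) _ (mem_centralizer_singleton_iff.mpr rfl)
      rw [show toConjAct x • centralizer {y} = centralizer {y} from hfix, toConjAct_smul,
        mem_centralizer_singleton_iff] at this
      exact this.symm
  simpa [hper, f, smul_iterate, centralizer_conj_s14] using
    iterate_injOn_Iio_minimalPeriod (f := f) (x := centralizer {y})

theorem notMem_centralizer_conj_pow {x y : G} (n : ℕ) (hy : ¬Commute y (x * y * x⁻¹)) :
    x ∉ centralizer {x ^ n * y * (x ^ n)⁻¹} := by
  intro hx
  have hxx : x ^ n * x * (x ^ n)⁻¹ = x := by rw [← (Commute.self_pow x n).eq, mul_inv_cancel_right]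
  have hxy : Commute x y := by
    rw [← Commute.conj_iff (x ^ n), hxx]
    exact mem_centralizer_singleton_iff.mp hx
  exact hy (by rw [hxy.eq, mul_inv_cancel_right])

theorem add_two_le_ncard_centSet [Finite G] {x y : G} {q : ℕ} (hq : q.Prime) (hxq : x ^ q = 1)
    (hx : x ∉ center G) (hy : ¬Commute y (x * y * x⁻¹)) : q + 2 ≤ (centSet G).ncard := by
  set S := (fun n : ℕ => centralizer {x ^ n * y * (x ^ n)⁻¹}) '' Set.Iio q
  have hS : S.ncard = q := by
    rw [(injOn_centralizer_conj_pow hq hxq hy).ncard_image, Set.ncard_Iio_nat]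
  have hxS : ∀ K ∈ S, x ∉ K := by
    rintro _ ⟨n, -, rfl⟩
    exact notMem_centralizer_conj_pow n hy
  have hCx : centralizer {x} ∉ S := fun h => hxS _ h (mem_centralizer_singleton_iff.mpr rfl)
  have htop : ⊤ ∉ insert (centralizer {x}) S := by
    rintro (h | h)
    · exact hx (mem_center_iff.mpr fun g => mem_centralizer_singleton_iff.mp (h ▸ mem_top g))
    · exact hxS _ h (mem_top x)
  have hsub : insert ⊤ (insert (centralizer {x}) S) ⊆ centSet G := by
    rintro _ (rfl | rfl | ⟨n, -, rfl⟩)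
    · exact ⟨1, by simp⟩
    · exact ⟨x, rfl⟩
    · exact ⟨_, rfl⟩
  calc q + 2 = (insert ⊤ (insert (centralizer {x}) S)).ncard := by
        rw [Set.ncard_insert_of_notMem htop, Set.ncard_insert_of_notMem hCx, hS]
    _ ≤ (centSet G).ncard := Set.ncard_le_ncard hsub (Set.finite_range _)

end

theorem stmt14_general (G : Type*) [Group G] [Finite G]
    (hZ : Subgroup.center G = ⊥) (q : ℕ) (hq : q.Prime)
    (hdvd : q ∣ Nat.card G) :
    q + 2 ≤ (centSet G).ncard := by
  have : Fact q.Prime := ⟨hq⟩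
  obtain ⟨x, hx⟩ := exists_prime_orderOf_dvd_card' q hdvd
  obtain ⟨y, hy⟩ := exists_not_commute_conj_of_center_eq_bot hZ hq hx
  have hxZ : x ∉ center G := by
    rw [hZ, mem_bot]
    rintro rfl
    exact hq.one_lt.ne (by rwa [orderOf_one] at hx)
  exact add_two_le_ncard_centSet hq (hx ▸ pow_orderOf_eq_one x) hxZ hy

/-- A non-abelian finite group with trivial center whose largest prime divisor is `q`
has at least `q + 2` element centralizers. -/
theorem stmt14 (G : Type*) [Group G] [Finite G]
    (hG : ¬∀ a b : G, a * b = b * a)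
    (hZ : Subgroup.center G = ⊥) (q : ℕ) (hq : q.Prime)
    (hdvd : q ∣ Nat.card G)
    (hmax : ∀ r : ℕ, r.Prime → r ∣ Nat.card G → r ≤ q) :
    q + 2 ≤ (centSet G).ncard :=
  stmt14_general G hZ q hq hdvd
end

section
/- Let G be a non-abelian finite group with trivial center. Then |Cent(G)| ≤ |G| − 1, with equality if and only if G is isomorphic to the symmetric group S₃. -/
set_option linter.unusedSectionVars false

section Aux

open Subgroup Set

variable {G : Type*} [Group G]

lemma centralizer_singleton_inv (x : G) :
    Subgroup.centralizer {x⁻¹} = Subgroup.centralizer ({x} : Set G) := by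
  ext g
  simp only [Subgroup.mem_centralizer_iff, Set.mem_singleton_iff, forall_eq]
  constructor
  · intro h
    have := congrArg (fun y => x * y * x) h
    simpa [mul_assoc] using this.symm
  · intro h
    have := congrArg (fun y => x⁻¹ * y * x⁻¹) h
    simpa [mul_assoc] using this.symm

/-- If two elements of `{u, v}` have "mates" outside `{u,v}` with the same value of `f`, then
the range of `f` has at most `Nat.card G - 2` elements. -/
lemma range_ncard_le_sub_two [Finite G] {α : Type*} (f : G → α) (u v : G) (huv : u ≠ v)
    (hu : ∃ u', u' ∉ ({u, v} : Set G) ∧ f u' = f u)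
    (hv : ∃ v', v' ∉ ({u, v} : Set G) ∧ f v' = f v) :
    (Set.range f).ncard ≤ Nat.card G - 2 := by
  obtain ⟨u', hu', hfu⟩ := hu
  obtain ⟨v', hv', hfv⟩ := hv
  have hrange : Set.range f = f '' (Set.univ \ {u, v}) := by
    ext y
    constructor
    · rintro ⟨x, rfl⟩
      by_cases hxu : x = u
      · exact ⟨u', ⟨trivial, hu'⟩, by rw [hfu, hxu]⟩
      by_cases hxv : x = v
      · exact ⟨v', ⟨trivial, hv'⟩, by rw [hfv, hxv]⟩
      · exact ⟨x, ⟨trivial, by simp [hxu, hxv]⟩, rfl⟩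
    · rintro ⟨x, _, rfl⟩
      exact ⟨x, rfl⟩
  rw [hrange]
  calc (f '' (Set.univ \ {u, v})).ncard ≤ (Set.univ \ ({u, v} : Set G)).ncard :=
        Set.ncard_image_le (Set.toFinite _)
    _ = Nat.card G - 2 := by
        rw [Set.ncard_diff (Set.subset_univ _) (Set.toFinite _), Set.ncard_univ,
          Set.ncard_pair huv]

lemma range_ncard_le_sub_one [Finite G] {α : Type*} (f : G → α) (u : G)
    (hu : ∃ u', u' ≠ u ∧ f u' = f u) :
    (Set.range f).ncard ≤ Nat.card G - 1 := by
  obtain ⟨u', hu', hfu⟩ := hu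
  have hrange : Set.range f = f '' (Set.univ \ {u}) := by
    ext y
    constructor
    · rintro ⟨x, rfl⟩
      by_cases hxu : x = u
      · exact ⟨u', ⟨trivial, hu'⟩, by rw [hfu, hxu]⟩
      · exact ⟨x, ⟨trivial, hxu⟩, rfl⟩
    · rintro ⟨x, _, rfl⟩
      exact ⟨x, rfl⟩
  rw [hrange]
  calc (f '' (Set.univ \ {u})).ncard ≤ (Set.univ \ ({u} : Set G)).ncard :=
        Set.ncard_image_le (Set.toFinite _)
    _ = Nat.card G - 1 := by
        rw [Set.ncard_diff (Set.subset_univ _) (Set.toFinite _), Set.ncard_univ,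
          Set.ncard_singleton]

/-- `centSet` has the same cardinality for isomorphic groups. -/
lemma centSet_ncard_congr {H : Type*} [Group H] (e : G ≃* H) :
    (centSet G).ncard = (centSet H).ncard := by
  have hmap : ∀ x : G, (Subgroup.centralizer ({x} : Set G)).map e.toMonoidHom
      = Subgroup.centralizer ({e x} : Set H) := by
    intro x
    ext y
    simp only [Subgroup.mem_map, Subgroup.mem_centralizer_iff, Set.mem_singleton_iff, forall_eq]
    constructor
    · rintro ⟨g, hg, rfl⟩
      rw [MulEquiv.coe_toMonoidHom, ← map_mul, ← map_mul, hg]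
    · intro hy
      refine ⟨e.symm y, ?_, by simp⟩
      exact e.injective (by rw [map_mul, map_mul, e.apply_symm_apply]; exact hy)
  have himg : (Subgroup.map e.toMonoidHom) '' centSet G = centSet H := by
    ext K
    constructor
    · rintro ⟨K', ⟨x, rfl⟩, rfl⟩
      exact ⟨e x, (hmap x).symm⟩
    · rintro ⟨y, rfl⟩
      exact ⟨Subgroup.centralizer {e.symm y}, ⟨e.symm y, rfl⟩, by rw [hmap, e.apply_symm_apply]⟩
  rw [← himg, Set.ncard_image_of_injective _ (Subgroup.map_injective e.injective)]

/-- The multiplicative version of `Equiv.permCongr`. -/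
def permCongrMulEquiv {α β : Type*} (e : α ≃ β) : Equiv.Perm α ≃* Equiv.Perm β :=
  { Equiv.permCongr e with
    map_mul' := fun p q => by
      ext x
      simp [Equiv.permCongr_apply] }

end Aux

open Subgroup

lemma centSet_perm3_ncard : (centSet (Equiv.Perm (Fin 3))).ncard = 5 := by
  classical
  set P := Equiv.Perm (Fin 3)
  let F : P → Finset P := fun x => Finset.univ.filter (fun y => x * y = y * x)
  let h : Subgroup P → Finset P := fun K =>
    Finset.univ.filter (fun y => y ∈ K)
  have hinj : Function.Injective h := by
    intro K K' hKK'
    ext y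
    have h1 := Finset.ext_iff.1 hKK' y
    simp only [h, Finset.mem_filter, Finset.mem_univ, true_and] at h1
    exact h1
  have hcomp : ∀ x : P, h (Subgroup.centralizer {x}) = F x := by
    intro x
    ext y
    simp [h, F, Subgroup.mem_centralizer_iff]
  have himg : h '' centSet P = ↑(Finset.univ.image F) := by
    ext s
    simp only [centSet, Finset.coe_image, Finset.coe_univ, Set.image_univ]
    constructor
    · rintro ⟨K, ⟨x, rfl⟩, rfl⟩
      exact ⟨x, (hcomp x).symm⟩
    · rintro ⟨x, rfl⟩
      exact ⟨Subgroup.centralizer {x}, ⟨x, rfl⟩, hcomp x⟩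
  have hc := Set.ncard_image_of_injective (centSet P) hinj
  rw [himg, Set.ncard_coe_finset] at hc
  rw [← hc]
  decide

/-- A non-abelian finite group with trivial center satisfies `|Cent(G)| ≤ |G| - 1`, with
equality iff `G ≅ S₃`. -/
theorem stmt15 (G : Type*) [Group G] [Finite G]
    (hG : ¬∀ a b : G, a * b = b * a)
    (hZ : Subgroup.center G = ⊥) :
    (centSet G).ncard ≤ Nat.card G - 1 ∧
      ((centSet G).ncard = Nat.card G - 1 ↔ Nonempty (G ≃* Equiv.Perm (Fin 3))) := by
  classical
  set f : G → Subgroup G := fun x => Subgroup.centralizer {x} with hf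
  have hcent : centSet G = Set.range f := rfl
  -- there is an element not equal to its inverse
  have ha : ∃ a : G, a ≠ a⁻¹ := by
    by_contra hcon
    push_neg at hcon
    apply hG
    intro a b
    have h1 : a * b = (a * b)⁻¹ := hcon _
    rw [mul_inv_rev, ← hcon a, ← hcon b] at h1
    exact h1
  obtain ⟨a, ha⟩ := ha
  have hfa : f a⁻¹ = f a := centralizer_singleton_inv a
  have hcard2 : 2 ≤ Nat.card G := by
    have hnt : Nontrivial G := by
      by_contra hcon
      rw [not_nontrivial_iff_subsingleton] at hcon
      exact hG fun a b => Subsingleton.elim _ _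
    exact Finite.one_lt_card_iff_nontrivial.2 hnt
  have ha1 : a ≠ 1 := by
    intro hh; apply ha; rw [hh, inv_one]
  have hle : (centSet G).ncard ≤ Nat.card G - 1 := by
    rw [hcent]
    exact range_ncard_le_sub_one f a⁻¹ ⟨a, ha, hfa.symm⟩
  refine ⟨hle, ?_, ?_⟩
  · -- forward direction
    intro h
    -- uniqueness of the collision pair
    have U : ∀ z : G, z ≠ z⁻¹ → z = a ∨ z = a⁻¹ := by
      intro z hz
      by_contra hcon
      push_neg at hcon
      obtain ⟨hza, hza'⟩ := hcon
      have hneq : a⁻¹ ≠ z⁻¹ := fun hh => hza (inv_injective hh).symm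
      have hmem1 : a ∉ ({a⁻¹, z⁻¹} : Set G) := by
        simp only [Set.mem_insert_iff, Set.mem_singleton_iff]
        push_neg
        exact ⟨ha, fun hh => hza' (by rw [hh, inv_inv])⟩
      have hmem2 : z ∉ ({a⁻¹, z⁻¹} : Set G) := by
        simp only [Set.mem_insert_iff, Set.mem_singleton_iff]
        push_neg
        exact ⟨hza', hz⟩
      have hbound := range_ncard_le_sub_two f a⁻¹ z⁻¹ hneq
        ⟨a, hmem1, hfa.symm⟩
        ⟨z, hmem2, (centralizer_singleton_inv z).symm⟩
      rw [← hcent, h] at hbound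
      omega
    by_cases hc : a * a = a⁻¹
    · -- order 3 case
      have ha3 : a * (a * a) = 1 := by rw [hc, mul_inv_cancel]
      have haa1 : a * a ≠ 1 := fun hh => ha (eq_inv_of_mul_eq_one_left hh)
      have haaa : a ≠ a * a := by
        intro hh
        apply ha1
        have h1 : a * 1 = a * a := by rw [mul_one]; exact hh
        exact (mul_left_cancel h1).symm
      have haainv : (a * a)⁻¹ = a := by rw [hc, inv_inv]
      -- every element outside {1, a, a*a} is an involution inverting a
      have key : ∀ g : G, g ≠ 1 → g ≠ a → g ≠ a * a → g⁻¹ = g ∧ g * a * g⁻¹ = a * a := by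
        intro g hg1 hga hga2
        have hginv : g⁻¹ = g := by
          by_contra hgg
          rcases U g (fun hh => hgg hh.symm) with rfl | hh
          · exact hga rfl
          · exact hga2 (hh.trans hc.symm)
        refine ⟨hginv, ?_⟩
        have hcne : g * a * g⁻¹ ≠ (g * a * g⁻¹)⁻¹ := by
          intro hh
          apply ha
          have h1 : (g * a * g⁻¹)⁻¹ = g * a⁻¹ * g⁻¹ := by group
          rw [h1] at hh
          exact mul_left_cancel (mul_right_cancel hh)
        rcases U _ hcne with hh | hh
        · -- g commutes with a : contradiction
          exfalso
          have hcomm : g * a = a * g := by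
            have h2 := congrArg (fun y => y * g) hh
            rwa [mul_assoc, inv_mul_cancel, mul_one] at h2
          have hzne : g * a ≠ (g * a)⁻¹ := by
            intro heq
            have h1 : (g * a)⁻¹ = a⁻¹ * g := by rw [mul_inv_rev, hginv]
            rw [h1, ← hc, hcomm] at heq
            -- heq : a * g = a * a * g
            have h2 : a * g = 1 * (a * g) := by rw [one_mul]
            rw [h2, mul_assoc a a g] at heq
            exact ha1 (mul_right_cancel heq).symm
          rcases U _ hzne with hh2 | hh2
          · have h3 : g * a = 1 * a := by rw [one_mul]; exact hh2
            exact hg1 (mul_right_cancel h3)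
          · rw [← hc] at hh2
            exact hga (mul_right_cancel hh2)
        · rw [hh, ← hc]
      -- there is an element outside {1, a, a*a}
      have htex : ∃ t : G, t ≠ 1 ∧ t ≠ a ∧ t ≠ a * a := by
        by_contra hcon
        push_neg at hcon
        apply hG
        have hmem : ∀ g : G, g ∈ Subgroup.zpowers a := by
          intro g
          rcases eq_or_ne g 1 with rfl | hg1
          · exact one_mem _
          rcases eq_or_ne g a with rfl | hga
          · exact Subgroup.mem_zpowers _
          rw [hcon g hg1 hga]
          exact mul_mem (Subgroup.mem_zpowers _) (Subgroup.mem_zpowers _)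
        intro x y
        obtain ⟨m, hm⟩ := Subgroup.mem_zpowers_iff.1 (hmem x)
        obtain ⟨k, hk⟩ := Subgroup.mem_zpowers_iff.1 (hmem y)
        rw [← hm, ← hk, ← zpow_add, ← zpow_add, add_comm]
      obtain ⟨t, ht1, hta, hta2⟩ := htex
      obtain ⟨htinv, htat⟩ := key t ht1 hta hta2
      -- G = {1, a, a*a, t, t*a, t*(a*a)}
      have cover : ∀ g : G, g = 1 ∨ g = a ∨ g = a * a ∨ g = t ∨ g = t * a ∨ g = t * (a * a) := by
        intro g
        rcases eq_or_ne g 1 with rfl | hg1; · tauto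
        rcases eq_or_ne g a with rfl | hga; · tauto
        rcases eq_or_ne g (a * a) with rfl | hga2; · tauto
        obtain ⟨hginv, hgag⟩ := key g hg1 hga hga2
        rcases eq_or_ne (t * g) 1 with hw1 | hw1
        · have h1 : g = t⁻¹ := eq_inv_of_mul_eq_one_right hw1
          rw [htinv] at h1
          tauto
        rcases eq_or_ne (t * g) a with hwa | hwa
        · have h1 : g = t⁻¹ * a := by rw [← hwa]; group
          rw [htinv] at h1
          tauto
        rcases eq_or_ne (t * g) (a * a) with hwa2 | hwa2
        · have h1 : g = t⁻¹ * (a * a) := by rw [← hwa2]; group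
          rw [htinv] at h1
          tauto
        exfalso
        obtain ⟨hwinv, hwaw⟩ := key (t * g) hw1 hwa hwa2
        have hcompute : (t * g) * a * (t * g)⁻¹ = a := by
          have h1 : (t * g) * a * (t * g)⁻¹ = t * (g * a * g⁻¹) * t⁻¹ := by group
          rw [h1, hgag]
          have h2 : t * (a * a) * t⁻¹ = (t * a * t⁻¹) * (t * a * t⁻¹) := by group
          rw [h2, htat]
          have h3 : a * a * (a * a) = a * (a * (a * a)) := by group
          have h4 : a * (a * a) = 1 := ha3
          rw [h3, h4, mul_one]
        have : a = a * a := hcompute.symm.trans hwaw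
        exact haaa this
      -- distinctness facts
      have d1ta : (1 : G) ≠ t * a := by
        intro hh
        apply hta2
        have h1 : t = a⁻¹ := eq_inv_of_mul_eq_one_left hh.symm
        rw [h1, ← hc]
      have d1ta2 : (1 : G) ≠ t * (a * a) := by
        intro hh
        apply hta
        have h1 : t = (a * a)⁻¹ := eq_inv_of_mul_eq_one_left hh.symm
        rw [h1, haainv]
      have da_ta : a ≠ t * a := by
        intro hh
        apply ht1
        have h1 : 1 * a = t * a := by rw [one_mul]; exact hh
        exact (mul_right_cancel h1).symm
      have da_ta2 : a ≠ t * (a * a) := by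
        intro hh
        apply hta2
        have h1 := congrArg (fun y => y * (a * a)⁻¹) hh
        rw [mul_assoc, mul_inv_cancel, mul_one, haainv] at h1
        exact h1.symm
      have daa_ta : a * a ≠ t * a := by
        intro hh
        apply hta.symm
        exact mul_right_cancel hh
      have daa_ta2 : a * a ≠ t * (a * a) := by
        intro hh
        apply ht1
        have h1 : 1 * (a * a) = t * (a * a) := by rw [one_mul]; exact hh
        exact (mul_right_cancel h1).symm
      have dt_ta : t ≠ t * a := by
        intro hh
        apply ha1
        have h1 : t * 1 = t * a := by rw [mul_one]; exact hh
        exact (mul_left_cancel h1).symm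
      have dt_ta2 : t ≠ t * (a * a) := by
        intro hh
        apply haa1
        have h1 : t * 1 = t * (a * a) := by rw [mul_one]; exact hh
        exact (mul_left_cancel h1).symm
      have dta_ta2 : t * a ≠ t * (a * a) := by
        intro hh
        exact haaa (mul_left_cancel hh)
      -- card G = 6
      have hcardG : Nat.card G = 6 := by
        have huniv : (Set.univ : Set G) = {1, a, a * a, t, t * a, t * (a * a)} := by
          ext g
          simp only [Set.mem_univ, true_iff, Set.mem_insert_iff, Set.mem_singleton_iff]
          exact cover g
        rw [← Set.ncard_univ, huniv]
        rw [Set.ncard_insert_of_notMem (by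
          simp only [Set.mem_insert_iff, Set.mem_singleton_iff]
          push_neg
          exact ⟨ha1.symm, haa1.symm, ht1.symm, d1ta, d1ta2⟩) (Set.toFinite _)]
        rw [Set.ncard_insert_of_notMem (by
          simp only [Set.mem_insert_iff, Set.mem_singleton_iff]
          push_neg
          exact ⟨haaa, hta.symm, da_ta, da_ta2⟩) (Set.toFinite _)]
        rw [Set.ncard_insert_of_notMem (by
          simp only [Set.mem_insert_iff, Set.mem_singleton_iff]
          push_neg
          exact ⟨hta2.symm, daa_ta, daa_ta2⟩) (Set.toFinite _)]
        rw [Set.ncard_insert_of_notMem (by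
          simp only [Set.mem_insert_iff, Set.mem_singleton_iff]
          push_neg
          exact ⟨dt_ta, dt_ta2⟩) (Set.toFinite _)]
        rw [Set.ncard_insert_of_notMem (by
          simp only [Set.mem_singleton_iff]
          exact dta_ta2) (Set.toFinite _)]
        rw [Set.ncard_singleton]
      -- set up the quotient action
      have ht2 : t * t = 1 := by
        have h1 := mul_inv_cancel t
        rwa [htinv] at h1
      have horder : orderOf t = 2 := by
        have hpow : t ^ 2 = 1 := by rw [pow_two, ht2]
        exact orderOf_eq_prime hpow ht1
      set H := Subgroup.zpowers t with hH
      have hmemH : ∀ g ∈ H, g = 1 ∨ g = t := by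
        intro g hg
        obtain ⟨k, hk⟩ := Subgroup.mem_zpowers_iff.1 hg
        have ht2z : t ^ (2 : ℤ) = 1 := by
          rw [show (2:ℤ) = ((2:ℕ) : ℤ) from rfl, zpow_natCast, pow_two, ht2]
        rcases Int.even_or_odd k with ⟨m, hm⟩ | ⟨m, hm⟩
        · left
          rw [← hk, hm, show m + m = 2 * m by ring, zpow_mul, ht2z, one_zpow]
        · right
          rw [← hk, hm, zpow_add, zpow_one, zpow_mul, ht2z, one_zpow, one_mul]
      have hcore : H.normalCore = ⊥ := by
        rw [Subgroup.eq_bot_iff_forall]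
        intro g hg
        rcases hmemH g (H.normalCore_le hg) with rfl | hgt
        · rfl
        exfalso
        rw [hgt] at hg
        have hconj : a * t * a⁻¹ ∈ H.normalCore :=
          Subgroup.Normal.conj_mem H.normalCore_normal t hg a
        rcases hmemH _ (H.normalCore_le hconj) with hh | hh
        · apply ht1
          have h2 := congrArg (fun y => a⁻¹ * y * a) hh
          simpa [mul_assoc] using h2
        · -- a * t * a⁻¹ = t → t commutes with a → contradiction with htat
          have hcomm : t * a = a * t := by
            have h2 := congrArg (fun y => y * a) hh
            rw [mul_assoc, inv_mul_cancel, mul_one] at h2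
            exact h2.symm
          have h3 : t * a * t⁻¹ = a := by
            rw [hcomm, mul_assoc, htinv, ht2, mul_one]
          rw [htat] at h3
          exact haaa h3.symm
      have hHcard : Nat.card H = 2 := by rw [hH, Nat.card_zpowers, horder]
      have hindex : H.index = 3 := by
        have h1 := H.index_mul_card
        rw [hHcard, hcardG] at h1
        omega
      have hquot : Nat.card (G ⧸ H) = 3 := by rw [← Subgroup.index_eq_card, hindex]
      set π := MulAction.toPermHom G (G ⧸ H) with hπ
      have hker : π.ker = ⊥ := by rw [← Subgroup.normalCore_eq_ker, hcore]
      have hinj : Function.Injective π := (MonoidHom.ker_eq_bot_iff π).1 hker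
      have hcards : Nat.card G = Nat.card (Equiv.Perm (G ⧸ H)) := by
        haveI : Fintype (G ⧸ H) := Fintype.ofFinite _
        have h3 : Fintype.card (G ⧸ H) = 3 := by rw [← Nat.card_eq_fintype_card, hquot]
        rw [hcardG, Nat.card_eq_fintype_card, Fintype.card_perm, h3]
        rfl
      have hbij : Function.Bijective π :=
        (Nat.bijective_iff_injective_and_card π).2 ⟨hinj, hcards⟩
      have σ : (G ⧸ H) ≃ Fin 3 := Finite.equivFinOfCardEq hquot
      exact ⟨(MulEquiv.ofBijective π hbij).trans (permCongrMulEquiv σ)⟩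
    · -- order 4 case: contradiction
      exfalso
      have haa : a * a = (a * a)⁻¹ := by
        by_contra hcon
        rcases U _ hcon with hh | hh
        · apply ha1
          have h1 : a * a = a * 1 := by rw [mul_one]; exact hh
          exact mul_left_cancel h1
        · exact hc hh
      -- a * a is central
      have hcentral : a * a ∈ Subgroup.center G := by
        rw [Subgroup.mem_center_iff]
        intro g
        have hcne : g * a * g⁻¹ ≠ (g * a * g⁻¹)⁻¹ := by
          intro hh
          apply ha
          have h1 : (g * a * g⁻¹)⁻¹ = g * a⁻¹ * g⁻¹ := by group
          rw [h1] at hh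
          exact mul_left_cancel (mul_right_cancel hh)
        have hexp : g * (a * a) * g⁻¹ = (g * a * g⁻¹) * (g * a * g⁻¹) := by group
        have hsq : g * (a * a) * g⁻¹ = a * a := by
          rcases U _ hcne with hh | hh
          · rw [hexp, hh]
          · rw [hexp, hh, ← mul_inv_rev, ← haa]
        have h2 := congrArg (fun y => y * g) hsq
        rwa [mul_assoc, inv_mul_cancel, mul_one] at h2
      rw [hZ, Subgroup.mem_bot] at hcentral
      exact ha (eq_inv_of_mul_eq_one_left hcentral)
  · -- backward direction
    rintro ⟨e⟩
    have h6 : Nat.card G = 6 := by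
      rw [Nat.card_congr e.toEquiv, Nat.card_eq_fintype_card, Fintype.card_perm,
        Fintype.card_fin]
      rfl
    rw [centSet_ncard_congr e, centSet_perm3_ncard, h6]
end

section
/- Let G be a finite p-group of conjugate type (p^k, 1) for a prime p and k ≥ 1. If |G/Z(G)| > p^{2k}, then the centralizer C_G(x) is non-abelian for every x ∈ G \ Z(G). -/
/-!
Let `C = C_G(x)` be abelian. Every non-central `y ∈ C` has `C ≤ C_G(y)`, and both have
index `m`, so `C_G(y) = C`. Hence for any `g ∉ C` we get `C ∩ C_G(g) = Z(G)`, so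
`[C : Z(G)] = [C : C ∩ C_G(g)] ≤ [G : C_G(g)] = m` and `[G : Z(G)] ≤ m² = p^(2k)`.
-/

namespace Subgroup

variable {G : Type*} [Group G]

theorem eq_of_le_of_index_eq {H K : Subgroup G} (hHK : H ≤ K) (hindex : H.index = K.index)
    (hK : K.index ≠ 0) : H = K := by
  have hrel : H.relIndex K = 1 :=
    Nat.eq_of_mul_eq_mul_right (Nat.pos_of_ne_zero hK) <| by
      rw [relIndex_mul_index hHK, hindex, one_mul]
  exact le_antisymm hHK (relIndex_eq_one.mp hrel)

theorem le_centralizer_singleton_of_mem {H : Subgroup G} [IsMulCommutative H] {y : G}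
    (hy : y ∈ H) : H ≤ centralizer {y} :=
  H.le_centralizer.trans (centralizer_le (Set.singleton_subset_iff.mpr hy))

/-- Conjugate type `(m, 1)`: as the class of `x` has size `[G : C_G(x)]`, every conjugacy class
has size `m` or `1`. -/
def HasConjugateType (G : Type*) [Group G] (m : ℕ) : Prop :=
  ∀ x : G, x ∉ center G → (centralizer {x}).index = m

namespace HasConjugateType

variable [Finite G] {m : ℕ}

theorem centralizer_eq_of_mem (hG : HasConjugateType G m) {x y : G} (hx : x ∉ center G)
    [IsMulCommutative (centralizer {x})] (hy : y ∈ centralizer {x}) (hyc : y ∉ center G) :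
    centralizer {y} = centralizer {x} :=
  (eq_of_le_of_index_eq (le_centralizer_singleton_of_mem hy) (by rw [hG x hx, hG y hyc])
    index_ne_zero_of_finite).symm

theorem centralizer_inf_centralizer_eq_center (hG : HasConjugateType G m) {x g : G}
    (hx : x ∉ center G) [IsMulCommutative (centralizer {x})] (hg : g ∉ centralizer {x}) :
    centralizer {x} ⊓ centralizer {g} = center G := by
  refine le_antisymm ?_ (le_inf (center_le_centralizer _) (center_le_centralizer _))
  rintro y ⟨hyx, hyg⟩
  by_contra hyc
  apply hg
  rw [← hG.centralizer_eq_of_mem hx hyx hyc, mem_centralizer_singleton_iff]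
  exact (mem_centralizer_singleton_iff.mp hyg).symm

theorem index_center_le_sq (hG : HasConjugateType G m) {x : G} (hx : x ∉ center G)
    [IsMulCommutative (centralizer {x})] : (center G).index ≤ m ^ 2 := by
  obtain ⟨g, hg⟩ : ∃ g, g ∉ centralizer {x} := by
    by_contra! h
    exact hx (centralizer_eq_top_iff_subset.mp (eq_top_iff' _ |>.mpr h) rfl)
  have hgc : g ∉ center G := fun h ↦ hg (center_le_centralizer _ h)
  calc (center G).index
      = (center G).relIndex (centralizer {x}) * (centralizer {x}).index :=
        (relIndex_mul_index (center_le_centralizer _)).symm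
    _ = (centralizer {g}).relIndex (centralizer {x}) * m := by
        rw [← hG.centralizer_inf_centralizer_eq_center hx hg, inf_relIndex_left, hG x hx]
    _ ≤ (centralizer {g}).relIndex ⊤ * m := by
        gcongr
        exact relIndex_le_of_le_right le_top
          (by rw [relIndex_top_right]; exact index_ne_zero_of_finite)
    _ = m ^ 2 := by rw [relIndex_top_right, hG g hgc, sq]

end HasConjugateType

end Subgroup

theorem stmt19_general (G : Type*) [Group G] [Finite G] (p k : ℕ)
    (htype : ∀ x : G, x ∉ Subgroup.center G → (Subgroup.centralizer {x}).index = p ^ k)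
    (hbig : p ^ (2 * k) < Nat.card (G ⧸ Subgroup.center G)) :
    ∀ x : G, x ∉ Subgroup.center G →
      ¬IsMulCommutative (Subgroup.centralizer ({x} : Set G)) := by
  intro x hx hcomm
  have hle : (Subgroup.center G).index ≤ (p ^ k) ^ 2 :=
    Subgroup.HasConjugateType.index_center_le_sq htype hx
  rw [← pow_mul, mul_comm] at hle
  exact hle.not_gt hbig

/-- For a finite `p`-group of conjugate type `(p^k, 1)` (`p` prime, `k ≥ 1`) with
`|G/Z(G)| > p^(2k)`, the centralizer of every non-central element is non-abelian. -/
theorem stmt19 (G : Type*) [Group G] [Finite G] (p k : ℕ) (hp : p.Prime) (hk : 1 ≤ k)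
    (hpG : IsPGroup p G)
    (htype : ∀ x : G, x ∉ Subgroup.center G → (Subgroup.centralizer {x}).index = p ^ k)
    (hbig : p ^ (2 * k) < Nat.card (G ⧸ Subgroup.center G)) :
    ∀ x : G, x ∉ Subgroup.center G →
      ¬IsMulCommutative (Subgroup.centralizer ({x} : Set G)) :=
  stmt19_general G p k htype hbig
end
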